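/- arXiv:1507.03050 — 2 statements merged into one kernel-verified Lean document; each statement's English description precedes it below -/
import Mathlib

section
/- Let H be a locally finite graph and let {f_n} be a sequence of non-negative integers. If H has the {f_n}-containment property and G is a subgraph of H, then G has the {f_n}-containment property. -/
open SimpleGraph

namespace Firefighter

variable {V : Type*}

/-- The set of vertices on fire at time `n`, starting from initial fire `X0`, with fire spreading
along paths of length at most `r` avoiding the protected sets `W 1, ..., W n`. -/
def fireSet (G : SimpleGraph V) (r : ℕ) (X0 : Set V) (W : ℕ → Set V) : ℕ → Set V
  | 0 => X0
  | n + 1 => {v | ∃ u ∈ fireSet G r X0 W n, ∃ p : G.Walk u v, p.length ≤ r ∧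
      ∀ w ∈ p.support, ∀ i, 1 ≤ i → i ≤ n + 1 → w ∉ W i}

/-- `W` is an `(f, r)`-containment strategy for the initial fire `X0` in `G`. -/
def IsContainmentStrategy (G : SimpleGraph V) (r : ℕ) (f : ℕ → ℕ)
    (X0 : Set V) (W : ℕ → Set V) : Prop :=
  (∀ n, 1 ≤ n → (W n).Finite ∧ (W n).ncard ≤ f n) ∧
  (∀ n, Disjoint (fireSet G r X0 W n) (W (n + 1))) ∧
  (∃ N, 0 < N ∧ ∀ n, N ≤ n → fireSet G r X0 W n = fireSet G r X0 W N)

/-- `G` has the `(f, r)`-containment property. -/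
def HasContainmentProperty (G : SimpleGraph V) (r : ℕ) (f : ℕ → ℕ) : Prop :=
  ∀ X0 : Set V, X0.Finite → ∃ W : ℕ → Set V, IsContainmentStrategy G r f X0 W

/-- A graph is locally finite if every vertex has finitely many neighbors. -/
def LocallyFiniteGraph (G : SimpleGraph V) : Prop := ∀ v, (G.neighborSet v).Finite

/-- The ball of radius `n` about the vertex `g0` (in the combinatorial metric). -/
def ball (G : SimpleGraph V) (g0 : V) (n : ℕ) : Set V :=
  {v | G.Reachable g0 v ∧ G.dist g0 v ≤ n}

/-- The sphere of radius `n` about the vertex `g0` (in the combinatorial metric). -/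
def sphere (G : SimpleGraph V) (g0 : V) (n : ℕ) : Set V :=
  {v | G.Reachable g0 v ∧ G.dist g0 v = n}

/-- For `T` a subset of the sphere of radius `n`, `nextAdj G g0 n T` is the set `T*` of vertices
of the sphere of radius `n+1` adjacent to at least one vertex of `T`. -/
def nextAdj (G : SimpleGraph V) (g0 : V) (n : ℕ) (T : Set V) : Set V :=
  {v ∈ sphere G g0 (n + 1) | ∃ u ∈ T, G.Adj u v}

/-- A graph has bounded degree if there is a uniform finite bound on vertex degrees. -/
def BoundedDegree (G : SimpleGraph V) : Prop :=
  ∃ D : ℕ, ∀ v, (G.neighborSet v).Finite ∧ (G.neighborSet v).ncard ≤ D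

/-- Two graphs are quasi-isometric. -/
def QuasiIsometric {V' : Type*} (G : SimpleGraph V) (H : SimpleGraph V') : Prop :=
  ∃ c : ℕ, 1 ≤ c ∧ ∃ (φ : V → V') (ψ : V' → V),
    (∀ g1 g2, H.dist (φ g1) (φ g2) ≤ c * G.dist g1 g2 + c) ∧
    (∀ h1 h2, G.dist (ψ h1) (ψ h2) ≤ c * H.dist h1 h2 + c) ∧
    (∀ g, G.dist g (ψ (φ g)) ≤ c) ∧
    (∀ h, H.dist h (φ (ψ h)) ≤ c)

/-- `f ≼ g` : there is `c > 0` with `f n ≤ c * g (c*n + c) + c` for all `n ≥ c`. -/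
def Preceq (f g : ℕ → ℕ) : Prop :=
  ∃ c : ℕ, 0 < c ∧ ∀ n, c ≤ n → f n ≤ c * g (c * n + c) + c

/-- `f` and `g` have equivalent asymptotic growth. -/
def AsympEquiv (f g : ℕ → ℕ) : Prop := Preceq f g ∧ Preceq g f

/-- The ball of radius `n` about a set `X` of vertices. -/
def ballSet (G : SimpleGraph V) (X : Set V) (n : ℕ) : Set V :=
  {v | ∃ u ∈ X, ∃ p : G.Walk u v, p.length ≤ n}

/-
Pull the strategy for `φ '' X₀` in `H` back along the embedding `φ : G → H`: protect `φ⁻¹' Wₙ`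
at time `n`. Every walk of `G` maps to a walk of `H` of the same length, so by induction the fire
in `G` at time `n` lies in the preimage of the fire in `H` at time `n`; in particular it never
meets the protected sets, and the protected sets are no larger than in `H`. The fire in `H` stays
inside a fixed finite set (fire spreads only to neighbours and `H` is locally finite), so the
monotone fire in `G` lives in a finite set and therefore stabilizes.
-/

section FireSet

variable {G : SimpleGraph V} {r : ℕ} {X0 : Set V} {W : ℕ → Set V}

theorem notMem_of_mem_fireSet (hdisj : ∀ n, Disjoint (fireSet G r X0 W n) (W (n + 1)))
    {n : ℕ} {v : V} (hv : v ∈ fireSet G r X0 W n) {i : ℕ} (hi : 1 ≤ i) (hin : i ≤ n + 1) :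
    v ∉ W i := by
  rcases hin.eq_or_lt with rfl | hlt
  · exact Set.disjoint_left.mp (hdisj n) hv
  · obtain ⟨m, rfl⟩ : ∃ m, n = m + 1 := Nat.exists_eq_succ_of_ne_zero (by omega)
    obtain ⟨u, -, p, -, hp⟩ := hv
    exact hp v p.end_mem_support i hi (by omega)

theorem monotone_fireSet (hdisj : ∀ n, Disjoint (fireSet G r X0 W n) (W (n + 1))) :
    Monotone (fireSet G r X0 W) := by
  refine monotone_nat_of_le_succ fun n v hv => ⟨v, hv, Walk.nil, Nat.zero_le r, ?_⟩
  rintro w hw i hi hin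
  rw [Walk.support_nil, List.mem_singleton] at hw
  exact hw ▸ notMem_of_mem_fireSet hdisj hv hi hin

theorem fireSet_succ_subset_ballSet (n : ℕ) :
    fireSet G r X0 W (n + 1) ⊆ ballSet G (fireSet G r X0 W n) r := by
  rintro v ⟨u, hu, p, hp, -⟩
  exact ⟨u, hu, p, hp⟩

end FireSet

theorem ballSet_one_subset (G : SimpleGraph V) (X : Set V) :
    ballSet G X 1 ⊆ ⋃ u ∈ X, insert u (G.neighborSet u) := by
  rintro v ⟨u, hu, p, hp⟩
  refine Set.mem_biUnion hu ?_
  interval_cases h : p.length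
  · rw [Walk.eq_of_length_eq_zero h]
    exact Set.mem_insert _ _
  · exact Set.mem_insert_of_mem u (Walk.adj_of_length_eq_one h)

theorem ballSet_succ_subset (G : SimpleGraph V) (X : Set V) (r : ℕ) :
    ballSet G X (r + 1) ⊆ ballSet G (ballSet G X 1) r := by
  rintro v ⟨u, hu, p, hp⟩
  cases p with
  | nil => exact ⟨_, ⟨_, hu, Walk.nil, zero_le_one⟩, Walk.nil, Nat.zero_le r⟩
  | cons h q =>
    rw [Walk.length_cons] at hp
    exact ⟨_, ⟨_, hu, h.toWalk, le_rfl⟩, q, by omega⟩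

theorem LocallyFiniteGraph.ballSet_finite {G : SimpleGraph V} (hG : LocallyFiniteGraph G)
    {X : Set V} (hX : X.Finite) (r : ℕ) : (ballSet G X r).Finite := by
  induction r generalizing X with
  | zero => exact hX.subset fun _ ⟨_, hu, p, hp⟩ =>
    Walk.eq_of_length_eq_zero (Nat.le_zero.mp hp) ▸ hu
  | succ r ih =>
    have hX1 : (ballSet G X 1).Finite :=
      (hX.biUnion fun u _ => (hG u).insert u).subset (ballSet_one_subset G X)
    exact (ih hX1).subset (ballSet_succ_subset G X r)

theorem LocallyFiniteGraph.fireSet_finite {G : SimpleGraph V} (hG : LocallyFiniteGraph G)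
    (r : ℕ) {X0 : Set V} (hX0 : X0.Finite) (W : ℕ → Set V) (n : ℕ) :
    (fireSet G r X0 W n).Finite := by
  induction n with
  | zero => exact hX0
  | succ n ih => exact (hG.ballSet_finite ih r).subset (fireSet_succ_subset_ballSet n)

theorem Monotone.exists_stable_of_subset_finite {S : ℕ → Set V} (hS : Monotone S)
    {F : Set V} (hF : F.Finite) (hSF : ∀ n, S n ⊆ F) :
    ∃ N, 0 < N ∧ ∀ n, N ≤ n → S n = S N := by
  have : Finite {s : Set V // s ⊆ F} := hF.finite_subsets.to_subtype
  obtain ⟨N, hN⟩ := WellFoundedGT.monotone_chain_condition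
    (⟨fun n => ⟨S n, hSF n⟩, fun _ _ h => hS h⟩ : ℕ →o {s : Set V // s ⊆ F})
  refine ⟨N + 1, N.succ_pos, fun n hn => ?_⟩
  have hS_eq (m : ℕ) (hm : N ≤ m) : S N = S m := congrArg Subtype.val (hN m hm)
  rw [← hS_eq n (by omega), ← hS_eq (N + 1) (by omega)]

section Comap

variable {V' : Type*} {G : SimpleGraph V} {H : SimpleGraph V'} {r : ℕ} {f : ℕ → ℕ}

theorem fireSet_comap_subset (φ : G →g H) (X0 : Set V) (W : ℕ → Set V') (n : ℕ) :
    fireSet G r X0 (fun i => φ ⁻¹' W i) n ⊆ φ ⁻¹' fireSet H r (φ '' X0) W n := by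
  induction n with
  | zero => exact Set.subset_preimage_image φ X0
  | succ n ih =>
    rintro v ⟨u, hu, p, hp, hsupp⟩
    refine ⟨φ u, ih hu, p.map φ, (p.length_map φ).trans_le hp, ?_⟩
    rintro x hx i hi hin
    rw [Walk.support_map, List.mem_map] at hx
    obtain ⟨w, hw, rfl⟩ := hx
    exact hsupp w hw i hi hin

theorem IsContainmentStrategy.comap (hH : LocallyFiniteGraph H) {φ : G →g H}
    (hφ : Function.Injective φ) {X0 : Set V} (hX0 : X0.Finite) {W : ℕ → Set V'}
    (hW : IsContainmentStrategy H r f (φ '' X0) W) :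
    IsContainmentStrategy G r f X0 (fun i => φ ⁻¹' W i) := by
  obtain ⟨hWcard, hWdisj, N, -, hN⟩ := hW
  have hdisj (n : ℕ) :
      Disjoint (fireSet G r X0 (fun i => φ ⁻¹' W i) n) (φ ⁻¹' W (n + 1)) :=
    ((hWdisj n).preimage φ).mono_left (fireSet_comap_subset φ X0 W n)
  have hbounded (n : ℕ) :
      fireSet G r X0 (fun i => φ ⁻¹' W i) n ⊆ φ ⁻¹' fireSet H r (φ '' X0) W N := by
    refine (fireSet_comap_subset φ X0 W n).trans (Set.preimage_mono ?_)
    rcases le_total n N with h | h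
    · exact monotone_fireSet hWdisj h
    · exact (hN n h).le
  have hfinite : (φ ⁻¹' fireSet H r (φ '' X0) W N).Finite :=
    (hH.fireSet_finite r (hX0.image φ) W N).preimage hφ.injOn
  refine ⟨fun n hn => ⟨(hWcard n hn).1.preimage hφ.injOn, ?_⟩, hdisj,
    Monotone.exists_stable_of_subset_finite (monotone_fireSet hdisj) hfinite hbounded⟩
  calc (φ ⁻¹' W n).ncard = (φ '' (φ ⁻¹' W n)).ncard := (Set.ncard_image_of_injective _ hφ).symm
    _ ≤ (W n).ncard := Set.ncard_le_ncard (Set.image_preimage_subset φ _) (hWcard n hn).1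
    _ ≤ f n := (hWcard n hn).2

theorem HasContainmentProperty.comap (hH : LocallyFiniteGraph H)
    (hC : HasContainmentProperty H r f) (φ : G →g H) (hφ : Function.Injective φ) :
    HasContainmentProperty G r f := fun X0 hX0 =>
  let ⟨_, hW⟩ := hC (φ '' X0) (hX0.image φ)
  ⟨_, hW.comap hH hφ hX0⟩

end Comap

/-- containment properties are inherited by subgraphs of locally finite graphs. -/
theorem stmt9 {V : Type*} (H : SimpleGraph V) (hlf : LocallyFiniteGraph H) (f : ℕ → ℕ)
    (hH : HasContainmentProperty H 1 f) (G : H.Subgraph) :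
    HasContainmentProperty G.coe 1 f :=
  hH.comap hlf G.hom Subgraph.hom_injective

end Firefighter
end

section
/- Let G be a locally finite graph. Suppose there exist a vertex g_0 and a real number λ > 1 such that for every integer n ≥ 0 and every subset A of the sphere S_G(g_0, n), the set A* of vertices of S_G(g_0, n+1) adjacent to a vertex of A satisfies |A*| ≥ λ·|A|. If {f_n} is a sequence of non-negative integers such that the series Σ_{k=1}^∞ f_k / λ^k converges, then G does not have the {f_n}-containment property. -/
/-!
Light the fire on the ball of radius `M` about `g0`, and let `T n` be the burning part of the sphere
of radius `M + n` at time `n`. The fire spreads from `T n` to `(T n)*`, of size at least `λ |T n|`,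
and only the at most `f 1 + ⋯ + f (n + 1)` vertices protected so far can be missing from
`T (n + 1)`. Normalising by `λ ^ n`, the accumulated losses are at most
`λ / (λ - 1) * Σ f k / λ ^ k`. Choosing `M` with `λ ^ M` above this bound, `|T 0| ≥ λ ^ M` keeps
every `T n` nonempty, whereas a fire that stops spreading at time `N` stays inside the ball of
radius `M + N`.
-/

open SimpleGraph

namespace Firefighter

variable {V : Type*}

lemma pos_of_le_mul_sub_sum_Icc {lam : ℝ} (hlam : 1 < lam) {f t : ℕ → ℝ}
    (hf : ∀ k, 0 ≤ f k)
    (hsum : Summable fun k : ℕ => f (k + 1) / lam ^ (k + 1))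
    (hstep : ∀ n, lam * t n - ∑ i ∈ Finset.Icc 1 (n + 1), f i ≤ t (n + 1))
    (ht0 : lam / (lam - 1) * ∑' k : ℕ, f (k + 1) / lam ^ (k + 1) < t 0) (n : ℕ) :
    0 < t n := by
  have hlam1 : 0 < lam - 1 := by linarith
  set c := lam / (lam - 1)
  set P : ℕ → ℝ := fun n => ∑ i ∈ Finset.Icc 1 n, f i
  have hP : ∀ n, 0 ≤ P n := fun n => Finset.sum_nonneg fun i _ => hf i
  -- The potential `Q` absorbs the cumulative losses `P`, leaving a loss of `c * f (n + 1)`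
  -- per step.
  set Q : ℕ → ℝ := fun n => t n - P n / (lam - 1)
  have hQ : ∀ n, lam * Q n - c * f (n + 1) ≤ Q (n + 1) := by
    intro n
    have hPsucc : P (n + 1) = P n + f (n + 1) := Finset.sum_Icc_succ_top (by omega) f
    have h : lam * t n - (P n + f (n + 1)) ≤ t (n + 1) := hPsucc ▸ hstep n
    simp only [Q, c, hPsucc]
    field_simp
    nlinarith [mul_le_mul_of_nonneg_left h hlam1.le]
  set S : ℕ → ℝ := fun n => ∑ k ∈ Finset.range n, f (k + 1) / lam ^ (k + 1)
  have hQ_ge : ∀ n, lam ^ n * (t 0 - c * S n) ≤ Q n := by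
    intro n
    induction n with
    | zero => simp [Q, P, S]
    | succ n ih =>
      have hS : S (n + 1) = S n + f (n + 1) / lam ^ (n + 1) := Finset.sum_range_succ _ n
      calc lam ^ (n + 1) * (t 0 - c * S (n + 1))
          = lam * (lam ^ n * (t 0 - c * S n)) - c * f (n + 1) := by
            rw [hS]; field_simp; ring
        _ ≤ lam * Q n - c * f (n + 1) := by gcongr
        _ ≤ Q (n + 1) := hQ n
  have hS_le : c * S n ≤ c * ∑' k : ℕ, f (k + 1) / lam ^ (k + 1) := by
    gcongr
    exact hsum.sum_le_tsum _ fun k _ => div_nonneg (hf _) (by positivity)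
  have hQ_pos : 0 < Q n := (mul_pos (pow_pos (by linarith) n) (by linarith)).trans_le (hQ_ge n)
  have hPQ : 0 ≤ P n / (lam - 1) := div_nonneg (hP n) hlam1.le
  linarith [show Q n = t n - P n / (lam - 1) from rfl]

section Graph

variable {G : SimpleGraph V} {g0 : V}

lemma ball_succ_subset (n : ℕ) :
    ball G g0 (n + 1) ⊆ ball G g0 n ∪ ⋃ u ∈ ball G g0 n, G.neighborSet u := by
  rintro v ⟨hr, hd⟩
  rcases Nat.lt_or_ge (G.dist g0 v) (n + 1) with h | h
  · exact Or.inl ⟨hr, Nat.lt_succ_iff.mp h⟩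
  obtain ⟨p, hp⟩ := hr.symm.exists_walk_length_eq_dist
  rw [dist_comm] at hp
  cases p with
  | nil => simp at h
  | cons hadj q =>
    refine Or.inr (Set.mem_biUnion ⟨q.reachable.symm, ?_⟩ hadj.symm)
    have := dist_le q.reverse
    simp only [Walk.length_reverse, Walk.length_cons] at this hp
    omega

lemma ball_finite (hlf : LocallyFiniteGraph G) (g0 : V) (n : ℕ) : (ball G g0 n).Finite := by
  induction n with
  | zero =>
    refine (Set.finite_singleton g0).subset fun v ⟨hr, hd⟩ => ?_
    exact (hr.dist_eq_zero_iff.mp (Nat.le_zero.mp hd)).symm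
  | succ n ih => exact (ih.union (ih.biUnion fun u _ => hlf u)).subset (ball_succ_subset n)

lemma sphere_subset_ball (n : ℕ) : sphere G g0 n ⊆ ball G g0 n :=
  fun _ hv => ⟨hv.1, hv.2.le⟩

lemma sphere_finite (hlf : LocallyFiniteGraph G) (n : ℕ) : (sphere G g0 n).Finite :=
  (ball_finite hlf g0 n).subset (sphere_subset_ball n)

lemma sphere_zero : sphere G g0 0 = {g0} := by
  ext v
  exact ⟨fun ⟨hr, hd⟩ => (hr.dist_eq_zero_iff.mp hd).symm,
    fun hv => hv ▸ ⟨Reachable.refl _, dist_self⟩⟩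

lemma pow_le_ncard_sphere (hlf : LocallyFiniteGraph G) {lam : ℝ} (hlam : 0 ≤ lam)
    (hexp : ∀ n : ℕ, ∀ A ⊆ sphere G g0 n,
      lam * (A.ncard : ℝ) ≤ ((nextAdj G g0 n A).ncard : ℝ)) (n : ℕ) :
    lam ^ n ≤ ((sphere G g0 n).ncard : ℝ) := by
  induction n with
  | zero => simp [sphere_zero]
  | succ n ih =>
    have hsub : nextAdj G g0 n (sphere G g0 n) ⊆ sphere G g0 (n + 1) := fun _ hv => hv.1
    calc lam ^ (n + 1) = lam * lam ^ n := pow_succ' lam n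
      _ ≤ lam * ((sphere G g0 n).ncard : ℝ) := by gcongr
      _ ≤ ((nextAdj G g0 n (sphere G g0 n)).ncard : ℝ) := hexp n _ subset_rfl
      _ ≤ ((sphere G g0 (n + 1)).ncard : ℝ) := by
        exact_mod_cast Set.ncard_le_ncard hsub (sphere_finite hlf _)

end Graph

section Fire

variable {G : SimpleGraph V} {r : ℕ} {X0 : Set V} {W : ℕ → Set V}

def protectedUpTo (W : ℕ → Set V) (n : ℕ) : Set V := ⋃ i ∈ Finset.Icc 1 n, W i

lemma mem_protectedUpTo {n : ℕ} {v : V} :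
    v ∈ protectedUpTo W n ↔ ∃ i, 1 ≤ i ∧ i ≤ n ∧ v ∈ W i := by
  simp [protectedUpTo, and_assoc]

lemma finite_protectedUpTo (hW : ∀ i, 1 ≤ i → (W i).Finite) (n : ℕ) :
    (protectedUpTo W n).Finite :=
  (Finset.Icc 1 n).finite_toSet.biUnion fun i hi => hW i (Finset.mem_Icc.mp hi).1

lemma ncard_protectedUpTo_le {f : ℕ → ℕ} (hW : ∀ i, 1 ≤ i → (W i).ncard ≤ f i) (n : ℕ) :
    (protectedUpTo W n).ncard ≤ ∑ i ∈ Finset.Icc 1 n, f i :=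
  (Finset.set_ncard_biUnion_le _ _).trans
    (Finset.sum_le_sum fun i hi => hW i (Finset.mem_Icc.mp hi).1)

lemma not_mem_protectedUpTo_of_mem_fireSet {n : ℕ} {v : V} (hv : v ∈ fireSet G r X0 W n) :
    v ∉ protectedUpTo W n := by
  rw [mem_protectedUpTo]
  rintro ⟨i, hi1, hin, hvi⟩
  cases n with
  | zero => omega
  | succ n =>
    obtain ⟨u, -, p, -, hp⟩ := hv
    exact hp v p.end_mem_support i hi1 hin hvi

lemma mem_fireSet_succ_of_adj (hr : 1 ≤ r)
    (hdis : ∀ n, Disjoint (fireSet G r X0 W n) (W (n + 1)))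
    {n : ℕ} {u v : V} (hu : u ∈ fireSet G r X0 W n) (huv : G.Adj u v)
    (hv : v ∉ protectedUpTo W (n + 1)) : v ∈ fireSet G r X0 W (n + 1) := by
  refine ⟨u, hu, .cons huv .nil, by simpa using hr, fun w hw i hi1 hin hwi => ?_⟩
  simp only [Walk.support_cons, Walk.support_nil, List.mem_cons, List.not_mem_nil,
    or_false] at hw
  rcases hw with rfl | rfl
  · rcases Nat.lt_or_ge i (n + 1) with hlt | hge
    · exact not_mem_protectedUpTo_of_mem_fireSet hu
        (mem_protectedUpTo.mpr ⟨i, hi1, by omega, hwi⟩)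
    · rw [le_antisymm hin hge] at hwi
      exact Set.disjoint_left.mp (hdis n) hu hwi
  · exact hv (mem_protectedUpTo.mpr ⟨i, hi1, hin, hwi⟩)

lemma fireSet_subset_ball {g0 : V} {m : ℕ} (hX0 : X0 ⊆ ball G g0 m) (n : ℕ) :
    fireSet G r X0 W n ⊆ ball G g0 (m + r * n) := by
  induction n with
  | zero => exact hX0
  | succ n ih =>
    rintro v ⟨u, hu, p, hp, -⟩
    obtain ⟨hr, hd⟩ := ih hu
    obtain ⟨q, hq⟩ := hr.exists_walk_length_eq_dist
    refine ⟨hr.trans p.reachable, (dist_le (q.append p)).trans ?_⟩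
    rw [Walk.length_append, hq, Nat.mul_succ]
    omega

lemma mul_ncard_sub_le_ncard_fireSet_succ_inter_sphere (hlf : LocallyFiniteGraph G) {g0 : V}
    {lam : ℝ} {f : ℕ → ℕ} {k : ℕ}
    (hexp : ∀ A ⊆ sphere G g0 k, lam * (A.ncard : ℝ) ≤ ((nextAdj G g0 k A).ncard : ℝ))
    (hW : ∀ i, 1 ≤ i → (W i).Finite ∧ (W i).ncard ≤ f i)
    (hdis : ∀ n, Disjoint (fireSet G 1 X0 W n) (W (n + 1))) (n : ℕ) :
    lam * ((fireSet G 1 X0 W n ∩ sphere G g0 k).ncard : ℝ)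
        - ∑ i ∈ Finset.Icc 1 (n + 1), (f i : ℝ)
      ≤ ((fireSet G 1 X0 W (n + 1) ∩ sphere G g0 (k + 1)).ncard : ℝ) := by
  set A := nextAdj G g0 k (fireSet G 1 X0 W n ∩ sphere G g0 k)
  set U := protectedUpTo W (n + 1)
  have hU : (U.ncard : ℝ) ≤ ∑ i ∈ Finset.Icc 1 (n + 1), (f i : ℝ) := by
    exact_mod_cast ncard_protectedUpTo_le (fun i hi => (hW i hi).2) (n + 1)
  have hAU : (A.ncard : ℝ) ≤ (A \ U).ncard + U.ncard := by
    exact_mod_cast Set.ncard_le_ncard_sdiff_add_ncard A U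
      (finite_protectedUpTo (fun i hi => (hW i hi).1) _)
  have hsub : A \ U ⊆ fireSet G 1 X0 W (n + 1) ∩ sphere G g0 (k + 1) :=
    fun v ⟨⟨hvS, u, hu, huv⟩, hvU⟩ => ⟨mem_fireSet_succ_of_adj le_rfl hdis hu.1 huv hvU, hvS⟩
  calc lam * ((fireSet G 1 X0 W n ∩ sphere G g0 k).ncard : ℝ)
        - ∑ i ∈ Finset.Icc 1 (n + 1), (f i : ℝ)
      ≤ A.ncard - U.ncard := sub_le_sub (hexp _ Set.inter_subset_right) hU
    _ ≤ (A \ U).ncard := by linarith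
    _ ≤ _ := by
      exact_mod_cast Set.ncard_le_ncard hsub
        ((sphere_finite hlf _).subset Set.inter_subset_right)

end Fire

/-- if every subset `A` of every sphere about `g0` satisfies `|A*| ≥ λ·|A|` with
`λ > 1`, and `Σ_{k≥1} f_k / λ^k` converges, then `G` does not have the `{f_n}`-containment
property. -/
theorem stmt13 {V : Type*} (G : SimpleGraph V) (hlf : LocallyFiniteGraph G) (g0 : V)
    (lam : ℝ) (hlam : 1 < lam)
    (hexp : ∀ n : ℕ, ∀ A ⊆ sphere G g0 n,
      lam * (A.ncard : ℝ) ≤ ((nextAdj G g0 n A).ncard : ℝ))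
    (f : ℕ → ℕ) (hsum : Summable (fun k : ℕ => (f (k + 1) : ℝ) / lam ^ (k + 1))) :
    ¬ HasContainmentProperty G 1 f := by
  intro hP
  obtain ⟨M, hM⟩ := pow_unbounded_of_one_lt
    (lam / (lam - 1) * ∑' k : ℕ, (f (k + 1) : ℝ) / lam ^ (k + 1)) hlam
  obtain ⟨W, hW, hdis, N, -, hstab⟩ := hP (ball G g0 M) (ball_finite hlf g0 M)
  have hfront :
      ∀ n, 0 < ((fireSet G 1 (ball G g0 M) W n ∩ sphere G g0 (M + n)).ncard : ℝ) := by
    refine pos_of_le_mul_sub_sum_Icc hlam (fun _ => Nat.cast_nonneg _) hsum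
      (fun n => mul_ncard_sub_le_ncard_fireSet_succ_inter_sphere hlf (hexp _) hW hdis n) ?_
    rw [show fireSet G 1 (ball G g0 M) W 0 ∩ sphere G g0 (M + 0) = sphere G g0 M from
      Set.inter_eq_self_of_subset_right (sphere_subset_ball M)]
    exact hM.trans_le (pow_le_ncard_sphere hlf (by linarith) hexp M)
  obtain ⟨v, hvX, hvS⟩ := Set.nonempty_of_ncard_ne_zero (Nat.cast_pos.mp (hfront (N + 1))).ne'
  rw [hstab (N + 1) N.le_succ] at hvX
  have hvB := fireSet_subset_ball subset_rfl N hvX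
  have hdist : G.dist g0 v = M + (N + 1) := hvS.2
  have hdist_le : G.dist g0 v ≤ M + 1 * N := hvB.2
  omega

end Firefighter
end
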